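/- Let ω : ℝ → ℝ be continuous, and let x, y : ℝ → ℝ be twice differentiable functions satisfying x''(t) + ω(t)²·x(t) = 0 and y''(t) + ω(t)²·y(t) = 0 for all t, with x(t)² + y(t)² > 0 for all t. Define r(t) = √(x(t)² + y(t)²) and h(t) = x(t)·y'(t) − y(t)·x'(t). Then h is constant, and r satisfies the Ermakov–Pinney equation r''(t) + ω(t)²·r(t) = h(0)²/r(t)³ for all t. -/

import Mathlib

/-!
The angular momentum `h = x y' - y x'` is the Wronskian of two solutions of the same equation
`u'' + ω² u = 0`; its derivative `x y'' - y x''` vanishes, so it is constant. For `r = √(x² + y²)`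
one computes `r r' = x x' + y y'` and `r'' + ω² r = ((x'² + y'²) r² - (x x' + y y')²) / r³`,
and by Lagrange's identity the numerator is `h²`.
-/

open Real

noncomputable def wronskian (x y : ℝ → ℝ) (t : ℝ) : ℝ :=
  x t * deriv y t - y t * deriv x t

section

variable {x y : ℝ → ℝ}

theorem hasDerivAt_wronskian {t : ℝ} (hx : DifferentiableAt ℝ x t)
    (hx' : DifferentiableAt ℝ (deriv x) t) (hy : DifferentiableAt ℝ y t)
    (hy' : DifferentiableAt ℝ (deriv y) t) :
    HasDerivAt (wronskian x y) (x t * deriv (deriv y) t - y t * deriv (deriv x) t) t :=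
  ((hx.hasDerivAt.mul hy'.hasDerivAt).sub (hy.hasDerivAt.mul hx'.hasDerivAt)).congr_deriv
    (by ring)

theorem wronskian_eq_of_deriv_deriv_add_mul_eq_zero (q : ℝ → ℝ) (hx : Differentiable ℝ x)
    (hx' : Differentiable ℝ (deriv x)) (hy : Differentiable ℝ y)
    (hy' : Differentiable ℝ (deriv y))
    (hxeq : ∀ t, deriv (deriv x) t + q t * x t = 0)
    (hyeq : ∀ t, deriv (deriv y) t + q t * y t = 0) (t s : ℝ) :
    wronskian x y t = wronskian x y s := by
  refine is_const_of_deriv_eq_zero (fun t ↦ (hasDerivAt_wronskian (hx t) (hx' t) (hy t)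
    (hy' t)).differentiableAt) (fun t ↦ ?_) t s
  rw [(hasDerivAt_wronskian (hx t) (hx' t) (hy t) (hy' t)).deriv]
  linear_combination x t * hyeq t - y t * hxeq t

theorem hasDerivAt_sqrt_sq_add_sq {t x' y' : ℝ} (hx : HasDerivAt x x' t)
    (hy : HasDerivAt y y' t) (hpos : 0 < x t ^ 2 + y t ^ 2) :
    HasDerivAt (fun s ↦ √(x s ^ 2 + y s ^ 2))
      ((x t * x' + y t * y') / √(x t ^ 2 + y t ^ 2)) t := by
  have hsum : HasDerivAt (fun s ↦ x s ^ 2 + y s ^ 2) (2 * x t * x' + 2 * y t * y') t :=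
    ((hx.pow 2).add (hy.pow 2)).congr_deriv (by norm_num)
  convert hsum.sqrt hpos.ne' using 1
  field_simp

theorem deriv_sqrt_sq_add_sq (hx : Differentiable ℝ x) (hy : Differentiable ℝ y)
    (hpos : ∀ t, 0 < x t ^ 2 + y t ^ 2) :
    deriv (fun s ↦ √(x s ^ 2 + y s ^ 2)) =
      fun t ↦ (x t * deriv x t + y t * deriv y t) / √(x t ^ 2 + y t ^ 2) :=
  funext fun t ↦ (hasDerivAt_sqrt_sq_add_sq (hx t).hasDerivAt (hy t).hasDerivAt (hpos t)).deriv

theorem deriv_deriv_sqrt_sq_add_sq (hx : Differentiable ℝ x) (hx' : Differentiable ℝ (deriv x))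
    (hy : Differentiable ℝ y) (hy' : Differentiable ℝ (deriv y))
    (hpos : ∀ t, 0 < x t ^ 2 + y t ^ 2) (t : ℝ) :
    deriv (deriv fun s ↦ √(x s ^ 2 + y s ^ 2)) t =
      ((deriv x t ^ 2 + deriv y t ^ 2 + x t * deriv (deriv x) t + y t * deriv (deriv y) t) *
          (x t ^ 2 + y t ^ 2) - (x t * deriv x t + y t * deriv y t) ^ 2) /
        √(x t ^ 2 + y t ^ 2) ^ 3 := by
  have hr := hasDerivAt_sqrt_sq_add_sq (hx t).hasDerivAt (hy t).hasDerivAt (hpos t)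
  have hp : HasDerivAt (fun s ↦ x s * deriv x s + y s * deriv y s) _ t :=
    ((hx t).hasDerivAt.mul (hx' t).hasDerivAt).add
      ((hy t).hasDerivAt.mul (hy' t).hasDerivAt)
  have hsqrt_ne := (sqrt_pos.2 (hpos t)).ne'
  rw [deriv_sqrt_sq_add_sq hx hy hpos, (hp.fun_div hr hsqrt_ne).deriv]
  field_simp
  rw [sq_sqrt (hpos t).le]
  ring

theorem ermakov_pinney_sqrt_sq_add_sq (q : ℝ → ℝ) (hx : Differentiable ℝ x)
    (hx' : Differentiable ℝ (deriv x)) (hy : Differentiable ℝ y)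
    (hy' : Differentiable ℝ (deriv y))
    (hxeq : ∀ t, deriv (deriv x) t + q t * x t = 0)
    (hyeq : ∀ t, deriv (deriv y) t + q t * y t = 0)
    (hpos : ∀ t, 0 < x t ^ 2 + y t ^ 2) (t : ℝ) :
    deriv (deriv fun s ↦ √(x s ^ 2 + y s ^ 2)) t + q t * √(x t ^ 2 + y t ^ 2) =
      wronskian x y t ^ 2 / √(x t ^ 2 + y t ^ 2) ^ 3 := by
  have hsqrt_ne := (sqrt_pos.2 (hpos t)).ne'
  have hsq := sq_sqrt (hpos t).le
  rw [deriv_deriv_sqrt_sq_add_sq hx hx' hy hy' hpos, wronskian]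
  field_simp
  linear_combination (x t ^ 2 + y t ^ 2) * (x t * hxeq t + y t * hyeq t) +
    q t * (√(x t ^ 2 + y t ^ 2) ^ 2 + x t ^ 2 + y t ^ 2) * hsq

end

theorem eliezer_grey_radial_equation_general
    (ω : ℝ → ℝ)
    (x y : ℝ → ℝ)
    (hx : Differentiable ℝ x) (hx' : Differentiable ℝ (deriv x))
    (hy : Differentiable ℝ y) (hy' : Differentiable ℝ (deriv y))
    (hxeq : ∀ t, deriv (deriv x) t + (ω t) ^ 2 * x t = 0)
    (hyeq : ∀ t, deriv (deriv y) t + (ω t) ^ 2 * y t = 0)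
    (hpos : ∀ t, (x t) ^ 2 + (y t) ^ 2 > 0)
    (r h : ℝ → ℝ)
    (hr : r = fun t => Real.sqrt ((x t) ^ 2 + (y t) ^ 2))
    (hh : h = fun t => x t * deriv y t - y t * deriv x t) :
    (∀ t, h t = h 0) ∧
    (∀ t, deriv (deriv r) t + (ω t) ^ 2 * r t = (h 0) ^ 2 / (r t) ^ 3) := by
  have hconst : ∀ t, h t = h 0 := fun t ↦ by
    subst hh
    exact wronskian_eq_of_deriv_deriv_add_mul_eq_zero _ hx hx' hy hy' hxeq hyeq t 0
  refine ⟨hconst, fun t ↦ ?_⟩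
  rw [← hconst t, hh, hr]
  exact ermakov_pinney_sqrt_sq_add_sq _ hx hx' hy hy' hxeq hyeq hpos t

/-- Eliezer–Grey interpretation: for the planar time-dependent oscillator with
components `x, y`, the angular momentum `h = xy' − yx'` is conserved and the
radius `r = √(x² + y²)` satisfies `r'' + ω(t)²r = h²/r³`. -/
theorem eliezer_grey_radial_equation
    (ω : ℝ → ℝ) (hω : Continuous ω)
    (x y : ℝ → ℝ)
    (hx : Differentiable ℝ x) (hx' : Differentiable ℝ (deriv x))
    (hy : Differentiable ℝ y) (hy' : Differentiable ℝ (deriv y))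
    (hxeq : ∀ t, deriv (deriv x) t + (ω t) ^ 2 * x t = 0)
    (hyeq : ∀ t, deriv (deriv y) t + (ω t) ^ 2 * y t = 0)
    (hpos : ∀ t, (x t) ^ 2 + (y t) ^ 2 > 0)
    (r h : ℝ → ℝ)
    (hr : r = fun t => Real.sqrt ((x t) ^ 2 + (y t) ^ 2))
    (hh : h = fun t => x t * deriv y t - y t * deriv x t) :
    (∀ t, h t = h 0) ∧
    (∀ t, deriv (deriv r) t + (ω t) ^ 2 * r t = (h 0) ^ 2 / (r t) ^ 3) :=
  eliezer_grey_radial_equation_general ω x y hx hx' hy hy' hxeq hyeq hpos r h hr hh
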